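/- The sequence (D_{n,k})_{k≥0}, where D_{n,k} is the number of signed permutations π ∈ B_n with exc_A(π) = k, is log-concave: for all n ≥ 3 and all k ≥ 1, D_{n,k}^2 ≥ D_{n,k−1} · D_{n,k+1}. -/

import Mathlib

open Finset Polynomial

/-- The group of colored permutations `G_{r,n} = Z_r ≀ S_n`, realized as bijections of the
colored alphabet `Σ = [n] × {0,…,r-1}` commuting with the color shift. -/
def ColoredPerm (r n : ℕ) [NeZero r] : Type :=
  {π : Equiv.Perm (Fin n × Fin r) //
    ∀ x : Fin n × Fin r, π (x.1, x.2 + 1) = ((π x).1, (π x).2 + 1)}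

/-- The color order on the colored alphabet:
`1^[r-1] < ⋯ < n^[r-1] < ⋯ < 1^[0] < ⋯ < n^[0]` (higher color is smaller). -/
def colorLt {r n : ℕ} (x y : Fin n × Fin r) : Prop :=
  y.2 < x.2 ∨ (x.2 = y.2 ∧ x.1 < y.1)

/-- The excedance number `exc` of a colored permutation. -/
noncomputable def cExc {r n : ℕ} [NeZero r] (π : ColoredPerm r n) : ℕ :=
  Nat.card {x : Fin n × Fin r // colorLt x (π.1 x)}

/-- `exc_A(π) = |{i ∈ [n-1] : π(i) > i}|` (positions are the color-0 letters,
and `i ∈ [n-1]` corresponds to `i.val + 1 < n`). -/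
noncomputable def cExcA {r n : ℕ} [NeZero r] (π : ColoredPerm r n) : ℕ :=
  Nat.card {i : Fin n // i.val + 1 < n ∧ colorLt (i, 0) (π.1 (i, 0))}

/-- `csum(π)`: the sum of the colors appearing in the window notation of `π`. -/
def csum {r n : ℕ} [NeZero r] (π : ColoredPerm r n) : ℕ :=
  ∑ i : Fin n, (π.1 (i, 0)).2.val

/-- `D_{n,k}`: the number of signed permutations `π ∈ B_n` with `exc_A(π) = k`. -/
noncomputable def DB (n k : ℕ) : ℕ :=
  Nat.card {π : ColoredPerm 2 n // cExcA π = k}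

/-!
Forgetting the signs of a signed permutation `π` leaves a permutation `σ`, and `exc_A` counts
the excedances `i < σ i` of `σ` with `π i` unsigned, so `D_{n,k} = ∑ⱼ A(n,j) 2^(n-j) C(j,k)`
with `A(n,j)` the Eulerian numbers. The recurrence `A(n+1,k) = (k+1) A(n,k) + (n+1-k) A(n,k-1)`
preserves log-concavity without internal zeros, i.e. total positivity of order 2 of the Toeplitz
matrix `(A(n, j - i))`, and so does the weight `2^(n-j)`. Since the binomial kernel `C(j,k)` is
itself totally positive of order 2, the Binet–Cauchy formula for `2 × 2` minors turns this into
log-concavity of `k ↦ ∑ⱼ aⱼ C(j,k)`.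
-/

theorem Nat.choose_succ_mul_choose_le_choose_mul_choose_succ {j j' : ℕ} (h : j ≤ j') (k : ℕ) :
    j.choose (k + 1) * j'.choose k ≤ j.choose k * j'.choose (k + 1) := by
  refine Nat.le_of_mul_le_mul_right ?_ k.succ_pos
  calc j.choose (k + 1) * j'.choose k * (k + 1)
      = j.choose k * (j - k) * j'.choose k := by rw [mul_right_comm, Nat.choose_succ_right_eq]
    _ ≤ j.choose k * (j' - k) * j'.choose k := by gcongr
    _ = j.choose k * j'.choose (k + 1) * (k + 1) := by
      rw [mul_right_comm, mul_assoc, ← Nat.choose_succ_right_eq, mul_assoc]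

theorem Finset.sum_range_mul_sum_range_sub_mul {R : Type*} [CommRing R] (f g h l : ℕ → R)
    (N : ℕ) :
    (∑ i ∈ range N, f i * g i) * (∑ i ∈ range N, h i * l i) -
        (∑ i ∈ range N, f i * l i) * (∑ i ∈ range N, h i * g i) =
      ∑ j ∈ range N, ∑ i ∈ range j, (f i * h j - f j * h i) * (g i * l j - g j * l i) := by
  induction N with
  | zero => simp
  | succ N ih =>
    have hnew : ∑ i ∈ range N, (f i * h N - f N * h i) * (g i * l N - g N * l i) =
        h N * l N * ∑ i ∈ range N, f i * g i - h N * g N * ∑ i ∈ range N, f i * l i -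
          f N * l N * ∑ i ∈ range N, h i * g i + f N * g N * ∑ i ∈ range N, h i * l i := by
      simp only [mul_sum, ← sum_sub_distrib, ← sum_add_distrib]
      exact sum_congr rfl fun i _ => by ring
    simp only [sum_range_succ]
    linear_combination ih - hnew

/-- Pólya frequency of order `2`, without a sign condition; for `ℕ`-valued sequences this is
log-concavity without internal zeros. -/
def IsPF2 {R : Type*} [Mul R] [LE R] (a : ℕ → R) : Prop :=
  ∀ ⦃i j : ℕ⦄, i ≤ j → a i * a (j + 2) ≤ a (i + 1) * a (j + 1)

theorem IsPF2.of_mul_le_sq {a : ℕ → ℕ} (hlc : ∀ j, a j * a (j + 2) ≤ a (j + 1) ^ 2)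
    (hgap : ∀ j, a j = 0 → a (j + 1) = 0) : IsPF2 a := by
  intro i j hij
  induction j, hij using Nat.le_induction with
  | base => simpa [sq] using hlc i
  | succ j _ ih =>
    rcases Nat.eq_zero_or_pos (a (j + 2)) with h | h
    · simp [hgap _ h]
    have hpos : 0 < a (j + 1) := Nat.pos_of_ne_zero fun h0 => h.ne' (hgap _ h0)
    refine Nat.le_of_mul_le_mul_left ?_ hpos
    calc a (j + 1) * (a i * a (j + 1 + 2)) = a i * (a (j + 1) * a (j + 3)) := by ring
      _ ≤ a i * a (j + 2) ^ 2 := Nat.mul_le_mul_left _ (hlc (j + 1))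
      _ = a i * a (j + 2) * a (j + 2) := by ring
      _ ≤ a (i + 1) * a (j + 1) * a (j + 2) := Nat.mul_le_mul_right _ ih
      _ = a (j + 1) * (a (i + 1) * a (j + 1 + 1)) := by ring

theorem IsPF2.mul_pow_sub {a : ℕ → ℕ} (ha : IsPF2 a) {n : ℕ} (hn : ∀ j, n < j → a j = 0)
    (r : ℕ) : IsPF2 fun j => a j * r ^ (n - j) := by
  intro i j hij
  by_cases hj : n < j + 2
  · simp [hn _ hj]
  have hexp : n - i + (n - (j + 2)) = n - (i + 1) + (n - (j + 1)) := by omega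
  calc a i * r ^ (n - i) * (a (j + 2) * r ^ (n - (j + 2)))
      = a i * a (j + 2) * r ^ (n - i + (n - (j + 2))) := by ring
    _ ≤ a (i + 1) * a (j + 1) * r ^ (n - i + (n - (j + 2))) := Nat.mul_le_mul_right _ (ha hij)
    _ = a (i + 1) * r ^ (n - (i + 1)) * (a (j + 1) * r ^ (n - (j + 1))) := by rw [hexp]; ring

section BinomialTransform

variable {R : Type*} [CommRing R] {a : ℕ → R} {N : ℕ}

theorem sum_range_mul_choose_succ_eq (hN : a N = 0) (k : ℕ) :
    ∑ j ∈ range N, a j * (j.choose (k + 1) : R) =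
      ∑ j ∈ range N, a (j + 1) * ((j + 1).choose (k + 1) : R) := by
  have := sum_range_succ' (fun j => a j * (j.choose (k + 1) : R)) N
  rw [sum_range_succ, hN] at this
  simpa using this

theorem sum_range_mul_choose_eq (hN : a N = 0) (k : ℕ) :
    ∑ j ∈ range N, a j * (j.choose k : R) =
      ∑ j ∈ range N, (a j - a (j + 1)) * ((j + 1).choose (k + 1) : R) := by
  calc ∑ j ∈ range N, a j * (j.choose k : R)
      = ∑ j ∈ range N, a j * ((j + 1).choose (k + 1) : R) -
          ∑ j ∈ range N, a j * (j.choose (k + 1) : R) := by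
        rw [← sum_sub_distrib]
        exact sum_congr rfl fun j _ => by rw [Nat.choose_succ_succ', Nat.cast_add]; ring
    _ = ∑ j ∈ range N, (a j - a (j + 1)) * ((j + 1).choose (k + 1) : R) := by
        rw [sum_range_mul_choose_succ_eq hN, ← sum_sub_distrib]
        exact sum_congr rfl fun j _ => by ring

theorem IsPF2.sum_range_mul_choose_mul_le_sq [LinearOrder R] [IsStrictOrderedRing R]
    (ha : IsPF2 a) (hN : a N = 0) (k : ℕ) :
    (∑ j ∈ range N, a j * (j.choose k : R)) *
        (∑ j ∈ range N, a j * (j.choose (k + 2) : R)) ≤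
      (∑ j ∈ range N, a j * (j.choose (k + 1) : R)) ^ 2 := by
  have hterm : ∀ j ∈ range N, ∀ i ∈ range j,
      0 ≤ (a (i + 1) * (a j - a (j + 1)) - a (j + 1) * (a i - a (i + 1))) *
        (((i + 1).choose (k + 1) : R) * ((j + 1).choose (k + 2) : R) -
          ((j + 1).choose (k + 1) : R) * ((i + 1).choose (k + 2) : R)) := by
    intro j _ i hi
    obtain ⟨j, rfl⟩ := Nat.exists_eq_add_of_lt (mem_range.1 hi)
    refine mul_nonneg ?_ (sub_nonneg.2 ?_)
    · have := ha (Nat.le_add_right i j)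
      rw [show i + j + 2 = i + j + 1 + 1 by ring] at this
      linear_combination this
    · exact_mod_cast (mul_comm _ _).trans_le
        (Nat.choose_succ_mul_choose_le_choose_mul_choose_succ (by omega) (k + 1))
  -- With `b k = ∑ⱼ a j C(j, k)`: against the common kernel `C(j + 1, ·)`, `b k` has
  -- coefficients `a j - a (j + 1)` and `b (k + 1)` has coefficients `a (j + 1)`, so Binet–Cauchy
  -- writes `b (k + 1)² - b k b (k + 2)` as a sum of products of `2 × 2` minors of these
  -- coefficients and of the binomial kernel.
  rw [← sub_nonneg]
  convert sum_nonneg fun j hj => sum_nonneg (hterm j hj) using 1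
  rw [← sum_range_mul_sum_range_sub_mul, ← sum_range_mul_choose_succ_eq hN,
    ← sum_range_mul_choose_succ_eq hN, ← sum_range_mul_choose_eq hN,
    ← sum_range_mul_choose_eq hN]
  ring

end BinomialTransform

open Equiv

namespace Equiv.Perm

variable {n : ℕ}

def exc (σ : Perm (Fin n)) : ℕ := #{i | i < σ i}

theorem exc_le (σ : Perm (Fin n)) : σ.exc ≤ n :=
  (card_filter_le _ _).trans (card_fin n).le

theorem card_symm_apply_lt (σ : Perm (Fin n)) : #{i | σ.symm i < i} = σ.exc := by
  simp only [exc, card_filter]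
  exact Fintype.sum_equiv σ.symm _ _ fun i => by simp

theorem exc_decomposeFin_symm_zero (τ : Perm (Fin n)) :
    exc (decomposeFin.symm (0, τ)) = τ.exc := by
  simp [exc, Fin.card_filter_univ_succ]

theorem exc_decomposeFin_symm_succ (τ : Perm (Fin n)) (q : Fin n) :
    exc (decomposeFin.symm (q.succ, τ)) = if τ.symm q < q then τ.exc else τ.exc + 1 := by
  have hsucc (i : Fin n) : i.succ < swap 0 q.succ (τ i).succ ↔ i < τ i ∧ i ≠ τ.symm q := by
    rw [Ne, τ.eq_symm_apply]
    by_cases h : τ i = q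
    · simp [h]
    · rw [swap_apply_of_ne_of_ne (Fin.succ_ne_zero _) (by simpa using h)]
      simp [h]
  have hmem : τ.symm q ∈ ({i | i < τ i} : Finset (Fin n)) ↔ τ.symm q < q := by simp
  simp only [exc, Fin.card_filter_univ_succ, decomposeFin_symm_apply_zero,
    decomposeFin_symm_apply_succ, hsucc, Fin.succ_pos, if_true, ← filter_filter, filter_ne',
    card_erase_eq_ite, hmem]
  split_ifs with h
  · have := card_pos.2 ⟨_, hmem.2 h⟩
    omega
  · rfl

theorem card_filter_exc_decomposeFin_symm (τ : Perm (Fin n)) (k : ℕ) :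
    #{p | exc (decomposeFin.symm (p, τ)) = k} =
      if τ.exc = k then k + 1 else if τ.exc + 1 = k then n - τ.exc else 0 := by
  have hcompl := card_filter_add_card_filter_not (s := univ) (fun q : Fin n => τ.symm q < q)
  simp only [card_symm_apply_lt, card_univ, Fintype.card_fin, not_lt] at hcompl
  rw [Fin.card_filter_univ_succ']
  simp only [exc_decomposeFin_symm_zero, exc_decomposeFin_symm_succ, apply_ite (· = k)]
  split_ifs with h1 h2
  · simp [h1, card_symm_apply_lt, add_comm]
  · subst h2
    simp only [Nat.left_eq_add, one_ne_zero, if_false_left, not_lt, and_true, zero_add]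
    omega
  · simp [h1, h2]

end Equiv.Perm

open Perm

def eulerian (n k : ℕ) : ℕ := #{σ : Perm (Fin n) | σ.exc = k}

theorem sum_ite_exc_eq (n j c : ℕ) :
    ∑ τ : Perm (Fin n), (if τ.exc = j then c else 0) = eulerian n j * c := by
  rw [← sum_filter, sum_const, smul_eq_mul, eulerian]

theorem eulerian_succ (n k : ℕ) :
    eulerian (n + 1) k = ∑ τ : Perm (Fin n), #{p | exc (decomposeFin.symm (p, τ)) = k} := by
  simp only [eulerian, card_filter]
  rw [← Fintype.sum_prod_type_right
    (f := fun x => if exc (decomposeFin.symm x) = k then 1 else 0)]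
  exact Fintype.sum_equiv decomposeFin _ _ fun σ => by simp

theorem eulerian_succ_zero (n : ℕ) : eulerian (n + 1) 0 = eulerian n 0 := by
  simp only [eulerian_succ, card_filter_exc_decomposeFin_symm, Nat.add_one_ne_zero, if_false]
  rw [sum_ite_exc_eq, zero_add, mul_one]

theorem eulerian_succ_succ (n k : ℕ) :
    eulerian (n + 1) (k + 1) = (k + 2) * eulerian n (k + 1) + (n - k) * eulerian n k := by
  have h (τ : Perm (Fin n)) : (if τ.exc = k + 1 then k + 1 + 1 else
      if τ.exc + 1 = k + 1 then n - τ.exc else 0) =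
      (if τ.exc = k + 1 then k + 2 else 0) + (if τ.exc = k then n - k else 0) := by
    split_ifs <;> omega
  simp only [eulerian_succ, card_filter_exc_decomposeFin_symm, h, sum_add_distrib, sum_ite_exc_eq]
  ring

theorem eulerian_eq_zero_of_lt {n k : ℕ} (h : n < k) : eulerian n k = 0 := by
  simp only [eulerian, card_eq_zero, filter_eq_empty_iff, mem_univ, true_implies]
  exact fun σ hσ => absurd (hσ ▸ σ.exc_le) (by omega)

theorem eulerian_zero_right_pos (n : ℕ) : 0 < eulerian n 0 :=
  card_pos.2 ⟨1, by simp [exc]⟩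

theorem eulerian_succ_eq_zero {n k : ℕ} (h : eulerian n k = 0) : eulerian n (k + 1) = 0 := by
  induction n generalizing k with
  | zero => exact eulerian_eq_zero_of_lt (by omega)
  | succ n ih =>
    obtain _ | k := k
    · exact absurd h (eulerian_zero_right_pos _).ne'
    rw [eulerian_succ_succ] at h ⊢
    have : eulerian n (k + 1) = 0 := by simp_all
    simp [this, ih this]

/-- For `p = k` and `m = n - 1 - k` the three factors are `y k, y (k + 2), y (k + 1)` for
`y k = (k + 1) x k + (n + 1 - k) x (k - 1)` and `x₀, …, x₃ = x (k - 1), …, x (k + 2)`;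
the slack is `(x₁ - x₂)²`. -/
theorem eulerian_step_mul_le_sq (p m x₀ x₁ x₂ x₃ : ℕ) (h₁ : x₁ * x₃ ≤ x₂ * x₂)
    (h₂ : x₀ * x₃ ≤ x₁ * x₂) (h₃ : x₀ * x₂ ≤ x₁ * x₁) :
    ((p + 1) * x₁ + (m + 2) * x₀) * ((p + 3) * x₃ + m * x₂) ≤
      ((p + 2) * x₂ + (m + 1) * x₁) ^ 2 := by
  have hamgm : 2 * (x₁ * x₂) ≤ x₁ * x₁ + x₂ * x₂ := by
    rcases le_total x₁ x₂ with h | h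
    · obtain ⟨d, rfl⟩ := Nat.exists_eq_add_of_le h; nlinarith
    · obtain ⟨d, rfl⟩ := Nat.exists_eq_add_of_le h; nlinarith
  nlinarith [Nat.mul_le_mul_left ((p + 1) * (p + 3)) h₁,
    Nat.mul_le_mul_left ((m + 2) * (p + 3)) h₂, Nat.mul_le_mul_left ((m + 2) * m) h₃]

theorem eulerian_succ_mul_le_sq {n : ℕ} (hpf : IsPF2 (eulerian n)) (k : ℕ) :
    eulerian (n + 1) k * eulerian (n + 1) (k + 2) ≤ eulerian (n + 1) (k + 1) ^ 2 := by
  by_cases hk : n + 1 < k + 2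
  · simp [eulerian_eq_zero_of_lt hk]
  obtain _ | k := k
  · obtain ⟨m, rfl⟩ : ∃ m, n = m + 1 := ⟨n - 1, by omega⟩
    have := eulerian_step_mul_le_sq 0 m 0 (eulerian (m + 1) 0) (eulerian (m + 1) 1)
      (eulerian (m + 1) 2) (hpf le_rfl) (by simp) (by simp)
    rw [eulerian_succ_zero, eulerian_succ_succ _ 0, eulerian_succ_succ _ 1]
    simpa using this
  · obtain ⟨m, rfl⟩ : ∃ m, n = k + m + 2 := ⟨n - k - 2, by omega⟩
    have := eulerian_step_mul_le_sq (k + 1) m (eulerian _ k) (eulerian _ (k + 1))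
      (eulerian _ (k + 2)) (eulerian _ (k + 3)) (hpf le_rfl) (hpf (Nat.le_succ k)) (hpf le_rfl)
    rw [eulerian_succ_succ _ k, eulerian_succ_succ _ (k + 1), eulerian_succ_succ _ (k + 2),
      show k + m + 2 - k = m + 2 by omega, show k + m + 2 - (k + 1) = m + 1 by omega,
      show k + m + 2 - (k + 2) = m by omega]
    exact this

theorem eulerian_isPF2 (n : ℕ) : IsPF2 (eulerian n) := by
  induction n with
  | zero => intro i j _; simp [eulerian_eq_zero_of_lt (Nat.succ_pos (j + 1))]
  | succ n ih => exact .of_mul_le_sq (eulerian_succ_mul_le_sq ih) fun _ => eulerian_succ_eq_zero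

namespace ColoredPerm

variable {r n : ℕ} [NeZero r]

def ofPerm (σ : Perm (Fin n)) (ε : Fin n → Fin r) : ColoredPerm r n :=
  ⟨prodShear σ fun i => Equiv.addLeft (ε i), fun x => by simp [add_assoc]⟩

theorem ofPerm_apply (σ : Perm (Fin n)) (ε : Fin n → Fin r) (x : Fin n × Fin r) :
    (ofPerm σ ε).1 x = (σ x.1, ε x.1 + x.2) :=
  rfl

open Fin.NatCast in
theorem apply_eq_apply_zero (π : ColoredPerm r n) (i : Fin n) (c : Fin r) :
    π.1 (i, c) = ((π.1 (i, 0)).1, (π.1 (i, 0)).2 + c) := by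
  have key (m : ℕ) : π.1 (i, (m : Fin r)) = ((π.1 (i, 0)).1, (π.1 (i, 0)).2 + m) := by
    induction m with
    | zero => simp
    | succ m ih => rw [Nat.cast_succ, π.2 (i, m), ih, add_assoc]
  simpa using key c.val

theorem ofPerm_bijective :
    Function.Bijective fun x : Perm (Fin n) × (Fin n → Fin r) => ofPerm x.1 x.2 := by
  constructor
  · rintro ⟨σ, ε⟩ ⟨σ', ε'⟩ h
    have h0 (i : Fin n) := congrArg (fun π : ColoredPerm r n => π.1 (i, 0)) h
    simp only [ofPerm_apply, add_zero, Prod.mk.injEq] at h0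
    exact Prod.ext (Equiv.ext fun i => (h0 i).1) (funext fun i => (h0 i).2)
  · intro π
    have hinj : Function.Injective fun i => (π.1 (i, 0)).1 := by
      intro i i' h
      have : π.1 (i', (π.1 (i, 0)).2 - (π.1 (i', 0)).2) = π.1 (i, 0) := by
        rw [apply_eq_apply_zero π i']
        exact Prod.ext h.symm (add_sub_cancel _ _)
      exact (congrArg Prod.fst (π.1.injective this)).symm
    refine ⟨(Equiv.ofBijective _ hinj.bijective_of_finite, fun i => (π.1 (i, 0)).2), ?_⟩
    exact Subtype.ext (Equiv.ext fun x => (apply_eq_apply_zero π x.1 x.2).symm)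

theorem cExcA_ofPerm (σ : Perm (Fin n)) (ε : Fin n → Fin r) :
    cExcA (ofPerm σ ε) = #{i | ε i = 0 ∧ i < σ i} := by
  rw [cExcA, ← Nat.card_eq_finsetCard]
  congr
  ext i
  simp only [mem_filter, mem_univ, true_and, colorLt, ofPerm_apply, add_zero, Fin.not_lt_zero,
    false_or, eq_comm (a := (0 : Fin r))]
  exact and_iff_right_of_imp fun h => lt_of_lt_of_le (Nat.succ_lt_succ h.2) (σ i).isLt

end ColoredPerm

theorem sum_X_pow_card_filter_eq_zero {ι : Type*} [Fintype ι] [DecidableEq ι] (S : Finset ι) :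
    ∑ ε : ι → Fin 2, (X : ℕ[X]) ^ #{i ∈ S | ε i = 0} = (X + 1) ^ #S * C (2 ^ #Sᶜ) := by
  calc ∑ ε : ι → Fin 2, (X : ℕ[X]) ^ #{i ∈ S | ε i = 0}
      = ∑ ε : ι → Fin 2, ∏ i, if i ∈ S ∧ ε i = 0 then X else 1 := by
        refine sum_congr rfl fun ε _ => ?_
        rw [← prod_filter, prod_const]
        congr 2
        ext i
        simp
    _ = ∏ i, ∑ c : Fin 2, if i ∈ S ∧ c = 0 then X else 1 :=
        (Fintype.prod_sum fun i (c : Fin 2) => if i ∈ S ∧ c = 0 then (X : ℕ[X]) else 1).symm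
    _ = ∏ i, if i ∈ S then X + 1 else C 2 := by
        refine prod_congr rfl fun i _ => ?_
        by_cases hi : i ∈ S <;> simp [hi, Fin.sum_univ_two]
    _ = (X + 1) ^ #S * C (2 ^ #Sᶜ) := by
        rw [prod_ite, prod_const, prod_const, ← map_pow, filter_mem_eq_inter, univ_inter,
          filter_notMem_eq_sdiff, compl_eq_univ_sdiff]

theorem card_filter_card_filter_eq_zero {ι : Type*} [Fintype ι] [DecidableEq ι] (S : Finset ι)
    (k : ℕ) : #{ε : ι → Fin 2 | #{i ∈ S | ε i = 0} = k} = (#S).choose k * 2 ^ #Sᶜ := by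
  have := congrArg (coeff · k) (sum_X_pow_card_filter_eq_zero S)
  simp only [finsetSum_coeff, coeff_X_pow, coeff_mul_C, coeff_X_add_one_pow, sum_boole,
    Nat.cast_id] at this
  rw [← this]
  simp only [eq_comm]

theorem DB_eq_sum_exc (n k : ℕ) :
    DB n k = ∑ σ : Perm (Fin n), σ.exc.choose k * 2 ^ (n - σ.exc) := by
  have e := (Equiv.ofBijective _ (ColoredPerm.ofPerm_bijective (r := 2) (n := n))).subtypeEquiv
    (p := fun x => #{i | x.2 i = 0 ∧ i < x.1 i} = k) (q := fun π => cExcA π = k)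
    fun x => by simp [ColoredPerm.cExcA_ofPerm]
  rw [DB, ← Nat.card_congr e, Nat.card_eq_fintype_card, Fintype.card_subtype, card_filter,
    Fintype.sum_prod_type]
  refine sum_congr rfl fun σ _ => ?_
  have hS (ε : Fin n → Fin 2) : (univ.filter fun i => ε i = 0 ∧ i < σ i) =
      (univ.filter fun i => i < σ i).filter fun i => ε i = 0 := by
    rw [filter_filter]
    simp only [and_comm]
  rw [← card_filter]
  simp only [hS, card_filter_card_filter_eq_zero, card_compl, Fintype.card_fin, Perm.exc]

theorem DB_eq_sum_eulerian (n k : ℕ) :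
    DB n k = ∑ j ∈ range (n + 1), eulerian n j * 2 ^ (n - j) * j.choose k := by
  rw [DB_eq_sum_exc, ← sum_fiberwise_of_maps_to fun σ _ => mem_range_succ_iff.2 σ.exc_le]
  refine sum_congr rfl fun j _ => ?_
  rw [sum_congr rfl fun σ hσ => by rw [(mem_filter.1 hσ).2], sum_const, smul_eq_mul, eulerian]
  ring

theorem DB_log_concave_general (n k : ℕ) (hk : 1 ≤ k) :
    DB n (k - 1) * DB n (k + 1) ≤ DB n k ^ 2 := by
  obtain ⟨k, rfl⟩ := Nat.exists_eq_add_of_le' hk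
  have hpf : IsPF2 fun j => ((eulerian n j * 2 ^ (n - j) : ℕ) : ℤ) := fun i j hij => by
    have := (eulerian_isPF2 n).mul_pow_sub (fun _ => eulerian_eq_zero_of_lt) 2 hij
    dsimp only at this ⊢
    exact_mod_cast this
  have := hpf.sum_range_mul_choose_mul_le_sq (N := n + 1)
    (by simp [eulerian_eq_zero_of_lt (Nat.lt_succ_self n)]) k
  simp only [add_tsub_cancel_right, DB_eq_sum_eulerian]
  exact_mod_cast this

/-- The sequence `(D_{n,k})_k` is log-concave: for `n ≥ 3` and `k ≥ 1`,
`D_{n,k}² ≥ D_{n,k−1}·D_{n,k+1}`. -/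
theorem DB_log_concave (n k : ℕ) (hn : 3 ≤ n) (hk : 1 ≤ k) :
    DB n (k - 1) * DB n (k + 1) ≤ DB n k ^ 2 :=
  DB_log_concave_general n k hk
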